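/- arXiv:1205.4564 — 2 statements merged into one kernel-verified Lean document; each statement's English description precedes it below -/
import Mathlib

section
/- Let G be a BGP instance in which every vertex except the manipulator m follows the GR-EA conditions, and suppose that at a certain time m starts announcing steadily, to each of its neighbors, an arbitrary fixed path (possibly none). Then the BGP routing dynamics on G converge to a stable routing state. -/
open scoped Classical

universe u

/-- A BGP instance: a graph whose edges are either directed customer-to-provider
edges (`custProv u v` : `u` is a customer of its provider `v`) or undirected
peer-to-peer edges (`peer`), with no directed cycle (GR1), together with, for every
vertex, a strict total preference (ranking) relation on paths
(`pref v P₁ P₂` : `v` prefers `P₁` over `P₂`, written `P₁ <_λ^v P₂`). -/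
structure BGP (V : Type u) where
  custProv : V → V → Prop
  peer : V → V → Prop
  peer_symm : ∀ {u v}, peer u v → peer v u
  peer_ne : ∀ {u v}, peer u v → u ≠ v
  /-- GR1 : no directed customer-provider cycles -/
  gr1 : ∀ v, ¬ Relation.TransGen custProv v v
  pref : V → List V → List V → Prop
  pref_irrefl : ∀ v p, ¬ pref v p p
  pref_trans : ∀ v p q r, pref v p q → pref v q r → pref v p r
  pref_total : ∀ v p q, p ≠ q → pref v p q ∨ pref v q p

namespace BGP

variable {V : Type u} (G : BGP V)

/-- `u` and `v` are adjacent (there is a peering between them). -/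
def Adj (u v : V) : Prop := G.custProv u v ∨ G.custProv v u ∨ G.peer u v

/-- Every step of the path (a path is a list of vertices, listed from its first
vertex to its last one) is a provider-to-customer step. -/
def DownPath : List V → Prop
  | u :: v :: rest => G.custProv v u ∧ DownPath (v :: rest)
  | _ => True

/-- A path is valley-free if provider-customer and peer-peer edges are only
followed by provider-customer edges. -/
def ValleyFree : List V → Prop
  | u :: v :: rest =>
      (G.custProv u v ∧ ValleyFree (v :: rest)) ∨
      ((G.custProv v u ∨ G.peer u v) ∧ G.DownPath (v :: rest))
  | _ => True

/-- The class `f^v(P)` of a path leaving its first vertex `v`: `3`, `2` or `1`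
according as the first edge goes to a customer, a peer, or a provider of `v`. -/
noncomputable def pathClass : List V → ℕ
  | u :: v :: _ => if G.custProv v u then 3 else if G.peer u v then 2 else 1
  | _ => 0

/-- The GR-EA conditions on rankings: paths of better class are preferred (GR3),
and among paths of the same class shorter ones are preferred; remaining ties are
broken by the fixed deterministic tie-break built into `pref`. -/
def GREA : Prop :=
  (∀ v p q, p.head? = some v → q.head? = some v →
      G.pathClass q < G.pathClass p → G.pref v p q) ∧
  (∀ v p q, p.head? = some v → q.head? = some v →
      G.pathClass p = G.pathClass q → p.length < q.length → G.pref v p q)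

/-- A routing state assigns to each vertex its selected path (possibly none). -/
abbrev State (V : Type u) := V → Option (List V)

/-- The set of paths available at `v` in state `σ`, where the manipulator `m`
steadily announces `attack u` to each of its neighbors `u` : an honest neighbor `u`
announces its selected path `p` to `v` when `(v u)p` is valley-free (GR2 with
export-all), the manipulator announces the (arbitrary) path `attack v`, and `v`
discards any path containing `v` itself (loop detection). -/
def avail (m : V) (attack : V → Option (List V)) (σ : State V) (v : V) :
    Set (List V) :=
  { P | ∃ u p, G.Adj u v ∧ P = v :: p ∧ v ∉ p ∧ p.head? = some u ∧
      ((u ≠ m ∧ σ u = some p ∧ G.ValleyFree (v :: p)) ∨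
       (u = m ∧ attack v = some p)) }

/-- `p` is the best path of `S` according to the ranking of `v`. -/
def IsBest (v : V) (S : Set (List V)) (p : List V) : Prop :=
  p ∈ S ∧ ∀ q ∈ S, q ≠ p → G.pref v p q

/-- The selected path (possibly none) is the best available one. -/
def BestChoice (v : V) (S : Set (List V)) : Option (List V) → Prop
  | some p => G.IsBest v S p
  | none => S = ∅

/-- A routing state is stable (for destination `d`, manipulator `m` and steady
manipulator announcements `attack`) if `d` selects its trivial path and every
other vertex but `m` selects the best path available to it. -/
def Stable (d m : V) (attack : V → Option (List V)) (σ : State V) : Prop :=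
  σ d = some [d] ∧
  ∀ v, v ≠ m → v ≠ d → G.BestChoice v (G.avail m attack σ v) (σ v)

/-- In state `σ`, the path `P` is disrupted at one of its vertices `v` (by the
path `P'` selected there). -/
def Disrupted (σ : State V) (P : List V) : Prop :=
  ∃ v s P', (v :: s) <:+ P ∧ σ v = some P' ∧ P' ≠ v :: s

/-- In state `σ`, the path `P` is disrupted at one of its vertices by a path of
better class. -/
def DisruptedByBetterClass (σ : State V) (P : List V) : Prop :=
  ∃ v s P', (v :: s) <:+ P ∧ σ v = some P' ∧ P' ≠ v :: s ∧
    G.pathClass (v :: s) < G.pathClass P'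

/-- Concatenation `PQ` of `P = (v_k … v_i)` and `Q = (v_i … v_0)` (they share the
vertex `v_i`). -/
def concatAt (P Q : List V) : List V := P.dropLast ++ Q

/-- The origin-spoofing attack in which `m` pretends to originate the prefix,
announcing the one-vertex path `(m)` exactly to the neighbors in `A`. -/
noncomputable def spoofAttack (m : V) (A : Set V) : V → Option (List V) :=
  fun v => if v ∈ A then some [m] else none

/-- S-BGP cheating capability: `m` may announce to a neighbor only a path
`(m u)P` that it received from a neighbor `u` (here: in the stable state reached
when `m` behaves correctly, i.e. announces nothing). -/
def SBGPCompliant (d m : V) (attack : V → Option (List V)) : Prop :=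
  ∃ σ0 : State V, G.Stable d m (fun _ => none) σ0 ∧
    ∀ v q, attack v = some q → G.Adj m v ∧ q ∈ G.avail m (fun _ => none) σ0 m

end BGP

section Aux

lemma wf_of_acyclic {α : Type*} [Finite α] {r : α → α → Prop}
    (h : ∀ v, ¬ Relation.TransGen r v v) : WellFounded r := by
  letI h1 : IsTrans α (Relation.TransGen r) := ⟨fun a b c => Relation.TransGen.trans⟩
  letI h2 : IsIrrefl α (Relation.TransGen r) := ⟨h⟩
  have hw : WellFounded (Relation.TransGen r) := Finite.wellFounded_of_trans_of_irrefl _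
  exact Subrelation.wf (fun {a b} hab => Relation.TransGen.single hab) hw

lemma head_eq_cons {α : Type*} {l : List α} {a : α} (h : l.head? = some a) :
    ∃ t, l = a :: t := by
  cases l with
  | nil => exact absurd h (by simp)
  | cons x t =>
    simp only [List.head?, Option.some.injEq] at h
    exact ⟨t, by rw [h]⟩

namespace BGP

variable {V : Type u} (G : BGP V)

lemma pathClass_cons (a b : V) (l : List V) :
    G.pathClass (a :: b :: l) = if G.custProv b a then 3 else if G.peer a b then 2 else 1 := rfl

lemma valleyFree_cons (a b : V) (l : List V) :
    G.ValleyFree (a :: b :: l) ↔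
      (G.custProv a b ∧ G.ValleyFree (b :: l)) ∨
      ((G.custProv b a ∨ G.peer a b) ∧ G.DownPath (b :: l)) := Iff.rfl

lemma downPath_cons (a b : V) (l : List V) :
    G.DownPath (a :: b :: l) ↔ G.custProv b a ∧ G.DownPath (b :: l) := Iff.rfl

lemma isBest_unique (v : V) {S : Set (List V)} {p q : List V}
    (hp : G.IsBest v S p) (hq : G.IsBest v S q) : p = q := by
  by_contra h
  exact G.pref_irrefl v p (G.pref_trans v p q p (hp.2 q hq.1 (Ne.symm h)) (hq.2 p hp.1 h))

lemma exists_best_finset (v : V) (s : Finset (List V)) :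
    s.Nonempty → ∃ B ∈ s, ∀ q ∈ s, q ≠ B → G.pref v B q := by
  classical
  induction s using Finset.induction_on with
  | empty => intro h; simp at h
  | @insert a s ha ih =>
    intro _
    rcases s.eq_empty_or_nonempty with rfl | hs
    · exact ⟨a, by simp, fun q hq hqa => absurd (by simpa using hq) hqa⟩
    · obtain ⟨B, hB, hBb⟩ := ih hs
      have hab : a ≠ B := fun e => ha (e ▸ hB)
      rcases G.pref_total v a B hab with h | h
      · refine ⟨a, Finset.mem_insert_self a s, ?_⟩
        intro q hq hqa
        rcases Finset.mem_insert.1 hq with rfl | hq'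
        · exact absurd rfl hqa
        · rcases eq_or_ne q B with rfl | hqB
          · exact h
          · exact G.pref_trans v a B q h (hBb q hq' hqB)
      · refine ⟨B, Finset.mem_insert_of_mem hB, ?_⟩
        intro q hq hqB
        rcases Finset.mem_insert.1 hq with rfl | hq'
        · exact h
        · exact hBb q hq' hqB

lemma exists_best (v : V) {S : Set (List V)} (hfin : S.Finite) (hne : S.Nonempty) :
    ∃ B, G.IsBest v S B := by
  obtain ⟨B, hB, hBb⟩ := G.exists_best_finset v hfin.toFinset
    (by rwa [Set.Finite.toFinset_nonempty])
  exact ⟨B, hfin.mem_toFinset.1 hB, fun q hq hqB => hBb q (hfin.mem_toFinset.2 hq) hqB⟩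

lemma avail_finite (m : V) (attack : V → Option (List V)) (σ : State V) (v : V)
    [Fintype V] : (G.avail m attack σ v).Finite := by
  have hsub : G.avail m attack σ v ⊆
      (Set.range fun u : V => v :: ((σ u).getD [])) ∪ {v :: ((attack v).getD [])} := by
    rintro P ⟨u, p, -, rfl, -, -, hcase⟩
    rcases hcase with ⟨-, hσ, -⟩ | ⟨-, ha⟩
    · exact Or.inl ⟨u, by simp [hσ]⟩
    · exact Or.inr (by simp [ha])
  exact ((Set.finite_range _).union (Set.finite_singleton _)).subset hsub

lemma no_two_cycle {u v : V} (h1 : G.custProv u v) (h2 : G.custProv v u) : False :=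
  G.gr1 u (Relation.TransGen.head h1 (Relation.TransGen.single h2))

end BGP

end Aux


/-- Let `G` be a BGP instance in which every vertex except the
manipulator `m` follows the GR-EA conditions, and suppose that at a certain time `m`
starts announcing steadily, to each of its neighbors, an arbitrary fixed path
(possibly none).  Then the BGP routing dynamics on `G` (modelled as any fair
asynchronous execution `seq` in which, at each step, honest vertices either keep
their selected path or switch to the best path currently available to them, and
every honest vertex re-evaluates its choice infinitely often) converge to a stable
routing state. -/
theorem bgp_convergence {V : Type u} [Fintype V] (G : BGP V) (hGREA : G.GREA)
    (d m : V) (hdm : d ≠ m)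
    (attack : V → Option (List V))
    (seq : ℕ → BGP.State V)
    (hd : ∀ t, seq t d = some [d])
    (hm : ∀ t, seq t m = seq 0 m)
    (hstep : ∀ t v, v ≠ m → v ≠ d →
      seq (t + 1) v = seq t v ∨
        G.BestChoice v (G.avail m attack (seq t) v) (seq (t + 1) v))
    (hfair : ∀ v, v ≠ m → v ≠ d → ∀ t, ∃ t', t ≤ t' ∧
      G.BestChoice v (G.avail m attack (seq t') v) (seq (t' + 1) v)) :
    ∃ T, G.Stable d m attack (seq T) ∧ ∀ t, T ≤ t → seq t = seq T := by
  classical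
  -- Step 0: generic convergence lemma: if the available set at `v` is eventually
  -- constant in time, then `v`'s selection is eventually constant.
  have hL2 : ∀ v : V, v ≠ m → v ≠ d → ∀ T : ℕ,
      (∀ t t', T ≤ t → T ≤ t' →
        G.avail m attack (seq t) v = G.avail m attack (seq t') v) →
      ∃ T', ∀ t t', T' ≤ t → T' ≤ t' → seq t v = seq t' v := by
    intro v hvm hvd T hconst
    obtain ⟨t₀, ht₀, hbc₀⟩ := hfair v hvm hvd T
    by_cases hne : (G.avail m attack (seq t₀) v).Nonempty
    · obtain ⟨B, hB⟩ := G.exists_best v (G.avail_finite m attack (seq t₀) v) hne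
      have hBt : ∀ t, T ≤ t → G.IsBest v (G.avail m attack (seq t) v) B := by
        intro t ht
        rw [hconst t t₀ ht ht₀]; exact hB
      have key : ∀ t o, T ≤ t → G.BestChoice v (G.avail m attack (seq t) v) o →
          o = some B := by
        rintro t (_ | p) ht h
        · have he : G.avail m attack (seq t) v = ∅ := h
          exact absurd (hBt t ht).1 (by rw [he]; simp)
        · have h' : G.IsBest v (G.avail m attack (seq t) v) p := h
          exact congrArg some (G.isBest_unique v h' (hBt t ht))
      have hall : ∀ t, t₀ + 1 ≤ t → seq t v = some B := by
        intro t ht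
        induction t, ht using Nat.le_induction with
        | base => exact key t₀ _ ht₀ hbc₀
        | succ n hn ih =>
          rcases hstep n v hvm hvd with he | hb
          · rw [he, ih]
          · exact key n _ (le_trans ht₀ (by omega)) hb
      exact ⟨t₀ + 1, fun t t' ht ht' => by rw [hall t ht, hall t' ht']⟩
    · have hemp : G.avail m attack (seq t₀) v = ∅ := Set.not_nonempty_iff_eq_empty.1 hne
      have key : ∀ t o, T ≤ t → G.BestChoice v (G.avail m attack (seq t) v) o →
          o = none := by
        rintro t (_ | p) ht h
        · rfl
        · have h' : G.IsBest v (G.avail m attack (seq t) v) p := h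
          have hp : p ∈ G.avail m attack (seq t) v := h'.1
          rw [hconst t t₀ ht ht₀, hemp] at hp
          exact absurd hp (Set.notMem_empty p)
      have hall : ∀ t, t₀ + 1 ≤ t → seq t v = none := by
        intro t ht
        induction t, ht using Nat.le_induction with
        | base => exact key t₀ _ ht₀ hbc₀
        | succ n hn ih =>
          rcases hstep n v hvm hvd with he | hb
          · rw [he, ih]
          · exact key n _ (le_trans ht₀ (by omega)) hb
      exact ⟨t₀ + 1, fun t t' ht ht' => by rw [hall t ht, hall t' ht']⟩
  -- Step 1 (customer routes): every vertex eventually either has a constant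
  -- selection, or never selects a down path starting at itself.
  have hwf : WellFounded G.custProv := wf_of_acyclic G.gr1
  have stageA : ∀ v : V, ∃ T : ℕ,
      (∀ t t', T ≤ t → T ≤ t' → seq t v = seq t' v) ∨
      (∀ t, T ≤ t → ∀ p, seq t v = some p → ¬ (p.head? = some v ∧ G.DownPath p)) := by
    intro v
    induction v using WellFounded.induction hwf with
    | _ v IH =>
    by_cases hvm : v = m
    · exact ⟨0, Or.inl fun t t' _ _ => by rw [hvm, hm t, hm t']⟩
    by_cases hvd : v = d
    · exact ⟨0, Or.inl fun t t' _ _ => by rw [hvd, hd t, hd t']⟩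
    have hex : ∀ u : V, ∃ Tu : ℕ,
        (∀ t t', Tu ≤ t → Tu ≤ t' → seq t u = seq t' u) ∨
        (G.custProv u v → ∀ t, Tu ≤ t → ∀ p, seq t u = some p →
            ¬ (p.head? = some u ∧ G.DownPath p)) := by
      intro u
      by_cases h : G.custProv u v
      · obtain ⟨Tu, hTu⟩ := IH u h
        exact ⟨Tu, hTu.imp id (fun hh _ => hh)⟩
      · exact ⟨0, Or.inr (fun h' => absurd h' h)⟩
    choose g hgspec using hex
    set T := Finset.univ.sup g with hT
    have hgle : ∀ u : V, g u ≤ T := fun u => Finset.le_sup (Finset.mem_univ u)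
    -- the set of available class-3 paths is constant after time T
    have hslice : ∀ t t', T ≤ t → T ≤ t' → ∀ P,
        (P ∈ G.avail m attack (seq t) v ∧ G.pathClass P = 3) →
        (P ∈ G.avail m attack (seq t') v ∧ G.pathClass P = 3) := by
      intro t t' ht ht' P hP0
      obtain ⟨hP, hc⟩ := hP0
      refine ⟨?_, hc⟩
      obtain ⟨u, p, hadj, rfl, hnp, hhead, hcase⟩ := hP
      rcases hcase with ⟨hum, hσ, hVF⟩ | hatk
      · obtain ⟨rest, rfl⟩ := head_eq_cons hhead
        have hcust : G.custProv u v := by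
          rw [G.pathClass_cons] at hc
          by_contra hcu
          rw [if_neg hcu] at hc
          split_ifs at hc <;> omega
        have hdown : G.DownPath (u :: rest) := by
          rcases (G.valleyFree_cons v u rest).1 hVF with ⟨h1, _⟩ | ⟨_, h2⟩
          · exact absurd h1 (fun h1 => G.no_two_cycle h1 hcust)
          · exact h2
        have hσ' : seq t' u = some (u :: rest) := by
          rcases hgspec u with hcon | hnd
          · rw [hcon t' t (le_trans (hgle u) ht') (le_trans (hgle u) ht)]; exact hσ
          · exact absurd ⟨hhead, hdown⟩ (hnd hcust t (le_trans (hgle u) ht) _ hσ)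
        exact ⟨u, u :: rest, hadj, rfl, hnp, hhead, Or.inl ⟨hum, hσ', hVF⟩⟩
      · exact ⟨u, p, hadj, rfl, hnp, hhead, Or.inr hatk⟩
    set S : Set (List V) :=
      {P | P ∈ G.avail m attack (seq T) v ∧ G.pathClass P = 3} with hSdef
    by_cases hne : S.Nonempty
    · -- there is a stable class-3 route : v converges to the best one
      have hSfin : S.Finite :=
        (G.avail_finite m attack (seq T) v).subset fun P hP => hP.1
      obtain ⟨B, hBS, hBb⟩ := G.exists_best v hSfin hne
      have hBmem : ∀ t, T ≤ t →
          B ∈ G.avail m attack (seq t) v ∧ G.pathClass B = 3 :=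
        fun t ht => hslice T t le_rfl ht B hBS
      have key : ∀ t o, T ≤ t → G.BestChoice v (G.avail m attack (seq t) v) o →
          o = some B := by
        rintro t (_ | p) ht h
        · have he : G.avail m attack (seq t) v = ∅ := h
          exact absurd (hBmem t ht).1 (by rw [he]; simp)
        · have h' : G.IsBest v (G.avail m attack (seq t) v) p := h
          refine congrArg some ?_
          by_contra hpB
          have h1 : G.pref v p B := h'.2 B (hBmem t ht).1 (Ne.symm hpB)
          have h2 : G.pref v B p := by
            by_cases hc3 : G.pathClass p = 3
            · exact hBb p (hslice t T ht le_rfl p ⟨h'.1, hc3⟩) hpB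
            · obtain ⟨u, q, hadj, hPp, hnp, hhead, -⟩ := h'.1
              obtain ⟨rest, hq⟩ := head_eq_cons hhead
              obtain ⟨u', q', -, hPB, -, hhead', -⟩ := (hBmem t ht).1
              refine hGREA.1 v B p (by rw [hPB]; rfl) (by rw [hPp]; rfl) ?_
              rw [(hBmem t ht).2, hPp, hq, G.pathClass_cons]
              rw [hPp, hq, G.pathClass_cons] at hc3
              split_ifs at hc3 ⊢ <;> omega
          exact G.pref_irrefl v p (G.pref_trans v p B p h1 h2)
      obtain ⟨t₀, ht₀, hbc₀⟩ := hfair v hvm hvd T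
      have hall : ∀ t, t₀ + 1 ≤ t → seq t v = some B := by
        intro t ht
        induction t, ht using Nat.le_induction with
        | base => exact key t₀ _ ht₀ hbc₀
        | succ n hn ih =>
          rcases hstep n v hvm hvd with he | hb
          · rw [he, ih]
          · exact key n _ (le_trans ht₀ (by omega)) hb
      exact ⟨t₀ + 1, Or.inl fun t t' ht ht' => by rw [hall t ht, hall t' ht']⟩
    · -- no stable class-3 route : v never selects a down path any more
      have hempty : ∀ t, T ≤ t → ∀ P, P ∈ G.avail m attack (seq t) v →
          G.pathClass P ≠ 3 := by
        intro t ht P hP hc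
        exact hne ⟨P, hslice t T ht le_rfl P ⟨hP, hc⟩⟩
      have key : ∀ t o, T ≤ t → G.BestChoice v (G.avail m attack (seq t) v) o →
          ∀ p, o = some p → ¬ (p.head? = some v ∧ G.DownPath p) := by
        rintro t (_ | q) ht h p hp
        · cases hp
        · rw [Option.some_inj] at hp
          subst hp
          rintro ⟨hh, hdn⟩
          have h' : G.IsBest v (G.avail m attack (seq t) v) q := h
          obtain ⟨u, q', hadj, hPq, hnp, hhead, -⟩ := h'.1
          obtain ⟨rest, hq'⟩ := head_eq_cons hhead
          have hcu : G.custProv u v := by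
            rw [hPq, hq'] at hdn
            exact ((G.downPath_cons v u rest).1 hdn).1
          exact hempty t ht q h'.1 (by rw [hPq, hq', G.pathClass_cons, if_pos hcu])
      obtain ⟨t₀, ht₀, hbc₀⟩ := hfair v hvm hvd T
      refine ⟨t₀ + 1, Or.inr ?_⟩
      intro t ht
      induction t, ht using Nat.le_induction with
      | base => exact key t₀ _ ht₀ hbc₀
      | succ n hn ih =>
        intro p hp
        rcases hstep n v hvm hvd with he | hb
        · exact ih p (by rw [← he]; exact hp)
        · exact key n _ (le_trans ht₀ (by omega)) hb p hp
  -- global time after which Step 1 applies to every vertex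
  choose gA hgA using stageA
  set TA := Finset.univ.sup gA with hTA
  have hgAle : ∀ u : V, gA u ≤ TA := fun u => Finset.le_sup (Finset.mem_univ u)
  -- Step 2 (peer and provider routes): every vertex converges, by induction
  -- from the top of the customer-provider hierarchy.
  have hwf' : WellFounded (fun a b : V => G.custProv b a) := by
    apply wf_of_acyclic
    intro v hv
    exact G.gr1 v (Relation.transGen_swap.mp hv)
  have stageBC : ∀ v : V, ∃ T, ∀ t t', T ≤ t → T ≤ t' → seq t v = seq t' v := by
    intro v
    induction v using WellFounded.induction hwf' with
    | _ v IH =>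
    by_cases hvm : v = m
    · exact ⟨0, fun t t' _ _ => by rw [hvm, hm t, hm t']⟩
    by_cases hvd : v = d
    · exact ⟨0, fun t t' _ _ => by rw [hvd, hd t, hd t']⟩
    have hex : ∀ u : V, ∃ Tu : ℕ, G.custProv v u →
        ∀ t t', Tu ≤ t → Tu ≤ t' → seq t u = seq t' u := by
      intro u
      by_cases h : G.custProv v u
      · obtain ⟨Tu, hTu⟩ := IH u h
        exact ⟨Tu, fun _ => hTu⟩
      · exact ⟨0, fun h' => absurd h' h⟩
    choose g hgspec using hex
    set T := max TA (Finset.univ.sup g) with hTdef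
    have hgle : ∀ u : V, g u ≤ T :=
      fun u => le_trans (Finset.le_sup (Finset.mem_univ u)) (le_max_right _ _)
    have hTAle : ∀ u : V, gA u ≤ T := fun u => le_trans (hgAle u) (le_max_left _ _)
    have hsub : ∀ t t', T ≤ t → T ≤ t' →
        G.avail m attack (seq t) v ⊆ G.avail m attack (seq t') v := by
      intro t t' ht ht' P hP
      obtain ⟨u, p, hadj, rfl, hnp, hhead, hcase⟩ := hP
      rcases hcase with ⟨hum, hσ, hVF⟩ | hatk
      · obtain ⟨rest, rfl⟩ := head_eq_cons hhead
        have hσ' : seq t' u = some (u :: rest) := by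
          by_cases hpu : G.custProv v u
          · rw [hgspec u hpu t' t (le_trans (hgle u) ht') (le_trans (hgle u) ht)]
            exact hσ
          · have hdown : G.DownPath (u :: rest) := by
              rcases (G.valleyFree_cons v u rest).1 hVF with ⟨h1, -⟩ | ⟨-, h2⟩
              · exact absurd h1 hpu
              · exact h2
            rcases hgA u with hcon | hnd
            · rw [hcon t' t (le_trans (hTAle u) ht') (le_trans (hTAle u) ht)]
              exact hσ
            · exact absurd ⟨hhead, hdown⟩ (hnd t (le_trans (hTAle u) ht) _ hσ)
        exact ⟨u, u :: rest, hadj, rfl, hnp, hhead, Or.inl ⟨hum, hσ', hVF⟩⟩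
      · exact ⟨u, p, hadj, rfl, hnp, hhead, Or.inr hatk⟩
    exact hL2 v hvm hvd T fun t t' ht ht' =>
      Set.Subset.antisymm (hsub t t' ht ht') (hsub t' t ht' ht)
  -- Conclusion
  choose gC hgC using stageBC
  set TF := Finset.univ.sup gC with hTF
  have hconstAll : ∀ t, TF ≤ t → seq t = seq TF := by
    intro t ht
    funext w
    exact hgC w t TF (le_trans (Finset.le_sup (Finset.mem_univ w)) ht)
      (Finset.le_sup (Finset.mem_univ w))
  refine ⟨TF, ⟨hd TF, ?_⟩, hconstAll⟩
  intro v hvm hvd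
  obtain ⟨t', ht', hbc⟩ := hfair v hvm hvd TF
  have e1 : seq t' = seq TF := hconstAll t' ht'
  have e2 : seq (t' + 1) = seq TF := hconstAll (t' + 1) (by omega)
  rw [e1, e2] at hbc
  exact hbc
end

section
/- In a BGP instance there is no dispute wheel, even in the presence of a manipulator steadily announcing arbitrary fixed paths. Precisely, there do not exist a circular sequence of vertices u_0, …, u_n (indices taken modulo n+1) and valley-free paths P^{u_i} = R_i Q_i from u_i, where each R_i contains at least two vertices, each Q_i is the suffix of P^{u_i} beginning at vertex u_{i+1}, and each Q_i contains at least one edge, such that for every i either f^{u_i}(P^{u_i}) > f^{u_i}(Q_{i-1}), or f^{u_i}(P^{u_i}) = f^{u_i}(Q_{i-1}) and |P^{u_i}| ≤ |Q_{i-1}|. -/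
open scoped Classical

universe u

/-!
Split according to whether some `Q i` starts with a step down to a customer.

If one does, then `P (i+1)` starts with a step down as well (its class is at least that of
`Q i`), so being valley-free it goes down all the way, and so does its suffix `Q (i+1)`.
Hence every `Q i` starts with a step down, the class comparisons are all ties, and
`|Q (i+1)| < |P (i+1)| ≤ |Q i|` decreases strictly around the wheel.

If none does, the step of `P i` leaving `u (i+1)` is not a step down, so by valley-freeness
every step of `P i` before `u (i+1)` goes up to a provider. Going around the wheel gives a
directed customer-provider cycle, contradicting GR1.
-/

open Relation

theorem List.exists_eq_cons_cons {α : Type*} {l : List α} {a : α} (hhead : l.head? = some a)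
    (hlen : 2 ≤ l.length) : ∃ b r, l = a :: b :: r := by
  match l, hhead, hlen with
  | _ :: b :: r, rfl, _ => exact ⟨b, r, rfl⟩

open Fin.NatCast in
theorem Fin.reflTransGen_add_one {n : ℕ} (i j : Fin (n + 1)) :
    ReflTransGen (fun a b : Fin (n + 1) => b = a + 1) i j := by
  have reach : ∀ k : ℕ, ReflTransGen (fun a b : Fin (n + 1) => b = a + 1) i (i + k) := by
    intro k
    induction k with
    | zero => simpa using ReflTransGen.refl
    | succ k ih => exact ih.tail (by push_cast; abel)
  simpa [Fin.cast_val_eq_self] using reach (j - i).val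

theorem Fin.forall_of_cycle {n : ℕ} {p : Fin (n + 1) → Prop} (hstep : ∀ i, p i → p (i + 1))
    {j : Fin (n + 1)} (hj : p j) (i : Fin (n + 1)) : p i := by
  induction Fin.reflTransGen_add_one j i with
  | refl => exact hj
  | tail _ hsucc ih => exact hsucc ▸ hstep _ ih

theorem Relation.transGen_of_cycle {α : Type*} {r : α → α → Prop} {n : ℕ}
    (f : Fin (n + 1) → α) (hstep : ∀ i, r (f i) (f (i + 1))) (i : Fin (n + 1)) :
    TransGen r (f i) (f i) :=
  .head' (hstep i) <| (Fin.reflTransGen_add_one (i + 1) i).lift f fun a _ hsucc => hsucc ▸ hstep a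

namespace BGP

variable {V : Type u} {G : BGP V}

theorem downPath_iff_isChain :
    ∀ {p : List V}, G.DownPath p ↔ p.IsChain (fun a b => G.custProv b a)
  | [] | [_] => by simp [DownPath]
  | _ :: b :: r => by simp [DownPath, List.isChain_cons_cons, downPath_iff_isChain (p := b :: r)]

theorem DownPath.suffix {p q : List V} (hp : G.DownPath p) (hq : q <:+ p) : G.DownPath q :=
  downPath_iff_isChain.2 ((downPath_iff_isChain.1 hp).suffix hq)

theorem pathClass_cons_cons_eq_three {a b : V} {r : List V} :
    G.pathClass (a :: b :: r) = 3 ↔ G.custProv b a := by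
  simp only [pathClass]
  split_ifs <;> simp_all

theorem pathClass_le_three (G : BGP V) (p : List V) : G.pathClass p ≤ 3 := by
  match p with
  | [] | [_] => simp [pathClass]
  | _ :: _ :: _ => simp only [pathClass]; split_ifs <;> omega

theorem DownPath.pathClass_eq_three {p : List V} (hp : G.DownPath p) (hlen : 2 ≤ p.length) :
    G.pathClass p = 3 := by
  match p, hp, hlen with
  | _ :: _ :: _, hp, _ => exact pathClass_cons_cons_eq_three.2 hp.1

theorem ValleyFree.downPath_of_pathClass_eq_three {p : List V} (hp : G.ValleyFree p)
    (h3 : G.pathClass p = 3) : G.DownPath p := by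
  match p, hp, h3 with
  | a :: b :: r, hp, h3 =>
    have hba : G.custProv b a := pathClass_cons_cons_eq_three.1 h3
    rcases hp with ⟨hab, -⟩ | ⟨-, hdown⟩
    · exact absurd (TransGen.tail (.single hab) hba) (G.gr1 a)
    · exact ⟨hba, hdown⟩

theorem ValleyFree.transGen_custProv {a x y : V} {r : List V} (hxy : ¬ G.custProv y x) :
    ∀ {l : List V}, G.ValleyFree (a :: (l ++ x :: y :: r)) → TransGen G.custProv a x
  | [], hp => by
    rcases hp with ⟨hax, -⟩ | ⟨-, hdown⟩
    · exact .single hax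
    · exact absurd hdown.1 hxy
  | b :: l, hp => by
    rcases hp with ⟨hab, hp⟩ | ⟨-, hdown⟩
    · exact .head hab (transGen_custProv hxy hp)
    · exact absurd (hdown.suffix (List.suffix_append (b :: l) _)).1 hxy

theorem concatAt_eq_cons_append {R Q : List V} {a : V} (hR : 2 ≤ R.length)
    (hhead : (concatAt R Q).head? = some a) : ∃ l, concatAt R Q = a :: (l ++ Q) := by
  obtain ⟨b, l, hR'⟩ : ∃ b l, R.dropLast = b :: l :=
    List.exists_cons_of_ne_nil (List.ne_nil_of_length_pos (by simp; omega))
  simp only [concatAt, hR', List.cons_append, List.head?_cons, Option.some.injEq] at hhead ⊢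
  exact ⟨l, by rw [hhead]⟩

end BGP

theorem no_dispute_wheel_general {V : Type u} (G : BGP V) (n : ℕ)
    (u : Fin (n + 1) → V) (P R Q : Fin (n + 1) → List V)
    (hconcat : ∀ i, P i = BGP.concatAt (R i) (Q i))
    (hheadP : ∀ i, (P i).head? = some (u i))
    (hheadQ : ∀ i, (Q i).head? = some (u (i + 1)))
    (hR : ∀ i, 2 ≤ (R i).length)
    (hQ : ∀ i, 2 ≤ (Q i).length)
    (hvf : ∀ i, G.ValleyFree (P i))
    (hpref : ∀ i,
      G.pathClass (Q (i - 1)) < G.pathClass (P i) ∨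
        (G.pathClass (P i) = G.pathClass (Q (i - 1)) ∧
          (P i).length ≤ (Q (i - 1)).length)) :
    False := by
  have hdec : ∀ i, ∃ l, P i = u i :: (l ++ Q i) := fun i =>
    hconcat i ▸ BGP.concatAt_eq_cons_append (hR i) (hconcat i ▸ hheadP i)
  have hpref' : ∀ i, G.pathClass (Q i) < G.pathClass (P (i + 1)) ∨
      (G.pathClass (P (i + 1)) = G.pathClass (Q i) ∧ (P (i + 1)).length ≤ (Q i).length) := by
    simpa only [add_sub_cancel_right] using fun i => hpref (i + 1)
  by_cases hdown : ∃ j, G.pathClass (Q j) = 3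
  · have hP : ∀ i, G.pathClass (Q i) = 3 → G.pathClass (P (i + 1)) = 3 := fun i hi => by
      have := G.pathClass_le_three (P (i + 1))
      have := hpref' i
      omega
    have hall : ∀ i, G.pathClass (Q i) = 3 := by
      obtain ⟨j, hj⟩ := hdown
      refine Fin.forall_of_cycle (fun i hi => ?_) hj
      obtain ⟨l, hp⟩ := hdec (i + 1)
      have hsuffix : Q (i + 1) <:+ P (i + 1) :=
        hp ▸ (List.suffix_append l _).trans (List.suffix_cons _ _)
      have hdownP := (hvf (i + 1)).downPath_of_pathClass_eq_three (hP i hi)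
      exact (hdownP.suffix hsuffix).pathClass_eq_three (hQ _)
    have hshrink : ∀ i, (Q (i + 1)).length < (Q i).length := fun i => by
      obtain ⟨l, hp⟩ := hdec (i + 1)
      have hlen : (P (i + 1)).length = l.length + (Q (i + 1)).length + 1 := by simp [hp]
      have hPQ := hpref' i
      rw [hall i, hP i (hall i)] at hPQ
      omega
    have hcycle := transGen_of_cycle (r := (· > ·)) (fun i => (Q i).length) hshrink 0
    rw [transGen_eq_self] at hcycle
    exact lt_irrefl _ hcycle
  · have hclimb : ∀ i, TransGen G.custProv (u i) (u (i + 1)) := fun i => by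
      obtain ⟨l, hp⟩ := hdec i
      obtain ⟨y, r, hq⟩ := List.exists_eq_cons_cons (hheadQ i) (hQ i)
      have hvf' := hvf i
      rw [hp, hq] at hvf'
      exact hvf'.transGen_custProv fun hstep =>
        hdown ⟨i, hq ▸ BGP.pathClass_cons_cons_eq_three.2 hstep⟩
    exact G.gr1 (u 0) (by simpa only [transGen_eq_self] using transGen_of_cycle u hclimb 0)

/-- In a BGP instance there is no dispute wheel, even in the
presence of a manipulator steadily announcing arbitrary fixed paths: there do not
exist a circular sequence of vertices `u 0, …, u n` (indices modulo `n+1`) and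
valley-free paths `P i = (R i)(Q i)` from `u i`, with `R i` containing at least two
vertices, `Q i` being the suffix of `P i` beginning at `u (i+1)` and containing at
least one edge, such that for every `i` either `f^{u i}(P i) > f^{u i}(Q (i-1))`,
or `f^{u i}(P i) = f^{u i}(Q (i-1))` and `|P i| ≤ |Q (i-1)|`. -/
theorem no_dispute_wheel {V : Type u} [Fintype V] (G : BGP V) (n : ℕ)
    (u : Fin (n + 1) → V) (P R Q : Fin (n + 1) → List V)
    (hconcat : ∀ i, P i = BGP.concatAt (R i) (Q i))
    (hglue : ∀ i, (R i).getLast? = (Q i).head?)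
    (hheadP : ∀ i, (P i).head? = some (u i))
    (hheadQ : ∀ i, (Q i).head? = some (u (i + 1)))
    (hR : ∀ i, 2 ≤ (R i).length)
    (hQ : ∀ i, 2 ≤ (Q i).length)
    (hvf : ∀ i, G.ValleyFree (P i))
    (hpref : ∀ i,
      G.pathClass (Q (i - 1)) < G.pathClass (P i) ∨
        (G.pathClass (P i) = G.pathClass (Q (i - 1)) ∧
          (P i).length ≤ (Q (i - 1)).length)) :
    False :=
  no_dispute_wheel_general G n u P R Q hconcat hheadP hheadQ hR hQ hvf hpref
end
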